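/- Let G be a finite simple maxdeg-3 graph and let S be a set of vertices of G, each of degree less than 3, such that S contains at least one indicator set, and let T be an indicator set contained in S of maximum demand. Then S satisfies the matching condition if and only if the demand of T is satisfied. (Paper's Lemma 2.) -/
import Mathlib


open scoped Classical

namespace Augmentation

variable {V : Type*} [Fintype V] [DecidableEq V]

/-- A vertex of `S` that has degree 2 and no neighbor in `S` (a *joker*). -/
def IsJoker (G : SimpleGraph V) (S : Finset V) (v : V) : Prop :=
  v ∈ S ∧ G.degree v = 2 ∧ ∀ w, G.Adj v w → w ∉ S

/-- A vertex of `S` of degree 1 all of whose neighbors have degree 3 (a *leaf*). -/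
def IsLeafVert (G : SimpleGraph V) (S : Finset V) (v : V) : Prop :=
  v ∈ S ∧ G.degree v = 1 ∧ ∀ w, G.Adj v w → G.degree w = 3

/-- `T ⊆ S` is an indicator set with demand `k` and side constraint `P` on the
    function assigning used valencies to the vertices of `S \ T`. -/
def IsIndicator (G : SimpleGraph V) (S T : Finset V) (k : ℕ)
    (P : (V → ℕ) → Prop) : Prop :=
  -- (1) joker
  (∃ v, IsJoker G S v ∧ T = {v} ∧ k = 1 ∧ P = fun _ => True) ∨
  -- (2) pair
  (∃ u v, u ∈ S ∧ v ∈ S ∧ G.Adj u v ∧ G.degree u = 2 ∧ G.degree v = 2 ∧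
    T = {u, v} ∧ k = 2 ∧ P = fun _ => True) ∨
  -- (3) leaf
  (∃ v, IsLeafVert G S v ∧ T = {v} ∧ k = 2 ∧ P = fun m => ∀ w, m w ≤ 1) ∨
  -- (4) branch
  (∃ u v, u ∈ S ∧ v ∈ S ∧ G.Adj u v ∧ G.degree u = 1 ∧ G.degree v = 2 ∧
    T = {u, v} ∧ k = 3 ∧
    P = fun m => (∃ w₁ w₂, w₁ ≠ w₂ ∧ 0 < m w₁ ∧ 0 < m w₂) ∧
      (∑ w ∈ G.neighborFinset v, m w) ≤ 1) ∨
  -- (5) island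
  (∃ v, v ∈ S ∧ G.degree v = 0 ∧ T = {v} ∧ k = 3 ∧ P = fun m => ∀ w, m w ≤ 1) ∨
  -- (6) stick
  (∃ u v, u ∈ S ∧ v ∈ S ∧ G.Adj u v ∧ G.degree u = 1 ∧ G.degree v = 1 ∧
    T = {u, v} ∧ k = 4 ∧ P = fun m => ∀ w, m w ≤ 2) ∨
  -- (7) two isolated vertices
  (∃ u v, u ∈ S ∧ v ∈ S ∧ u ≠ v ∧ G.degree u = 0 ∧ G.degree v = 0 ∧
    T = {u, v} ∧ k = 4 ∧ P = fun m => ∀ w, m w ≤ 2) ∨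
  -- (8) 3-cycle
  (∃ u v w, u ∈ S ∧ v ∈ S ∧ w ∈ S ∧ G.Adj u v ∧ G.Adj v w ∧ G.Adj w u ∧
    G.degree u = 2 ∧ G.degree v = 2 ∧ G.degree w = 2 ∧
    T = {u, v, w} ∧ k = 3 ∧ P = fun _ => True)

/-- The demand of `k` valencies from `S \ T` subject to the side constraint `P`
    is satisfied. -/
def DemandSatisfied (G : SimpleGraph V) (S T : Finset V) (k : ℕ)
    (P : (V → ℕ) → Prop) : Prop :=
  ∃ m : V → ℕ, (∀ w, m w ≤ 3 - G.degree w) ∧ (∀ w, w ∉ S \ T → m w = 0) ∧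
    (∑ w ∈ S \ T, m w) = k ∧ P m

/-- Parity condition: the total number of free valencies of `S` is even. -/
def ParityCond (G : SimpleGraph V) (S : Finset V) : Prop :=
  Even (∑ v ∈ S, (3 - G.degree v))

/-- Matching condition: the demand of every indicator set contained in `S`
    is satisfied. -/
def MatchingCond (G : SimpleGraph V) (S : Finset V) : Prop :=
  ∀ T k P, IsIndicator G S T k P → DemandSatisfied G S T k P

/-- `W` is a realization of `S`: a set of unordered pairs of distinct vertices
    of `S` (modeled as a simple graph), none of which is an edge of `G`, such
    that in `G + W` every vertex of `S` has degree exactly 3. -/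
def IsRealization (G : SimpleGraph V) (S : Finset V) (W : SimpleGraph V) : Prop :=
  (∀ a b, W.Adj a b → a ∈ S ∧ b ∈ S) ∧
  (∀ a b, W.Adj a b → ¬ G.Adj a b) ∧
  (∀ v ∈ S, (G ⊔ W).degree v = 3)

/-- The maximum demand of an indicator set contained in `S` (0 if none). -/
noncomputable def kmax (G : SimpleGraph V) (S : Finset V) : ℕ :=
  sSup {k | ∃ T P, IsIndicator G S T k P}

end Augmentation


namespace AugmentationAux

open Augmentation

variable {V : Type*} [Fintype V] [DecidableEq V]

set_option linter.unusedSectionVars false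

lemma exists_fn (A : Finset V) (c : V → ℕ) :
    ∀ k, k ≤ ∑ w ∈ A, c w →
    ∃ m : V → ℕ, (∀ w, m w ≤ c w) ∧ (∀ w, w ∉ A → m w = 0) ∧ ∑ w ∈ A, m w = k := by
  classical
  induction A using Finset.induction_on with
  | empty =>
      intro k hk
      simp only [Finset.sum_empty, Nat.le_zero] at hk
      exact ⟨fun _ => 0, fun w => Nat.zero_le _, fun w _ => rfl, by simp [hk]⟩
  | @insert a A ha ih =>
      intro k hk
      rw [Finset.sum_insert ha] at hk
      obtain ⟨m, hm1, hm2, hm3⟩ := ih (k - min k (c a)) (by omega)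
      have hma : m a = 0 := hm2 a ha
      refine ⟨fun w => if w = a then min k (c a) else m w, ?_, ?_, ?_⟩
      · intro w
        by_cases h : w = a
        · subst h; simp [min_le_right]
        · simp [h, hm1 w]
      · intro w hw
        have h1 : w ≠ a := fun e => hw (e ▸ Finset.mem_insert_self a A)
        have h2 : w ∉ A := fun hwA => hw (Finset.mem_insert_of_mem hwA)
        simp [h1, hm2 w h2]
      · rw [Finset.sum_insert ha]
        have heq : ∑ w ∈ A, (if w = a then min k (c a) else m w) = ∑ w ∈ A, m w :=
          Finset.sum_congr rfl (fun w hw => by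
            have : w ≠ a := fun e => ha (e ▸ hw); simp [this])
        rw [heq, hm3]
        simp only [if_true, eq_self_iff_true]
        omega

lemma demand_aux (G : SimpleGraph V) (S T' : Finset V) (k' : ℕ) (c : V → ℕ)
    (hc : ∀ w ∈ S \ T', c w ≤ 3 - G.degree w)
    (hk : k' ≤ ∑ w ∈ S \ T', c w) :
    ∃ m : V → ℕ, (∀ w, m w ≤ 3 - G.degree w) ∧ (∀ w, w ∉ S \ T' → m w = 0) ∧
      (∑ w ∈ S \ T', m w) = k' ∧ ∀ w, m w ≤ c w := by
  obtain ⟨m, h1, h2, h3⟩ := exists_fn (S \ T') (fun w => if w ∈ S \ T' then c w else 0)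
    k' (le_trans hk (le_of_eq (Finset.sum_congr rfl fun w hw => (if_pos hw).symm)))
  refine ⟨m, ?_, h2, h3, ?_⟩
  · intro w
    by_cases hw : w ∈ S \ T'
    · exact le_trans (h1 w) (by simpa [hw] using hc w hw)
    · rw [h2 w hw]; exact Nat.zero_le _
  · intro w
    by_cases hw : w ∈ S \ T'
    · simpa [hw] using h1 w
    · rw [h2 w hw]; exact Nat.zero_le _

lemma demand_true {G : SimpleGraph V} {S T' : Finset V} {k' : ℕ}
    (hk : k' ≤ ∑ w ∈ S \ T', (3 - G.degree w)) :
    DemandSatisfied G S T' k' (fun _ => True) := by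
  obtain ⟨m, h1, h2, h3, _⟩ :=
    demand_aux G S T' k' (fun w => 3 - G.degree w) (fun w _ => le_rfl) hk
  exact ⟨m, h1, h2, h3, trivial⟩

lemma demand_cap1 {G : SimpleGraph V} {S T' : Finset V} {k' : ℕ}
    (hS : ∀ v ∈ S, G.degree v < 3)
    (hk : k' ≤ (S \ T').card) :
    DemandSatisfied G S T' k' (fun m => ∀ w, m w ≤ 1) := by
  obtain ⟨m, h1, h2, h3, h4⟩ := demand_aux G S T' k' (fun _ => 1)
    (fun w hw => by have := hS w (Finset.mem_sdiff.mp hw).1; show (1:ℕ) ≤ 3 - G.degree w; omega)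
    (by simpa using hk)
  exact ⟨m, h1, h2, h3, h4⟩

lemma demand_cap2 {G : SimpleGraph V} {S T' : Finset V} {k' : ℕ}
    (hk : k' ≤ ∑ w ∈ S \ T', min (3 - G.degree w) 2) :
    DemandSatisfied G S T' k' (fun m => ∀ w, m w ≤ 2) := by
  obtain ⟨m, h1, h2, h3, h4⟩ := demand_aux G S T' k' (fun w => min (3 - G.degree w) 2)
    (fun w _ => min_le_left _ _) hk
  exact ⟨m, h1, h2, h3, fun w => le_trans (h4 w) (min_le_right _ _)⟩

lemma deg1_unique {G : SimpleGraph V} {u a b : V} (h : G.degree u = 1)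
    (ha : G.Adj u a) (hb : G.Adj u b) : a = b := by
  have hcard : (G.neighborFinset u).card ≤ 1 := by
    rw [G.card_neighborFinset_eq_degree u, h]
  exact Finset.card_le_one.mp hcard a ((SimpleGraph.mem_neighborFinset G _ _).mpr ha)
    b ((SimpleGraph.mem_neighborFinset G _ _).mpr hb)

lemma deg2_not_three {G : SimpleGraph V} {v a b c : V} (h : G.degree v = 2)
    (ha : G.Adj v a) (hb : G.Adj v b) (hc : G.Adj v c)
    (hab : a ≠ b) (hac : a ≠ c) (hbc : b ≠ c) : False := by
  have hsub : ({a, b, c} : Finset V) ⊆ G.neighborFinset v := by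
    intro x hx
    simp only [Finset.mem_insert, Finset.mem_singleton] at hx
    rcases hx with rfl | rfl | rfl
    · exact (SimpleGraph.mem_neighborFinset G _ _).mpr ha
    · exact (SimpleGraph.mem_neighborFinset G _ _).mpr hb
    · exact (SimpleGraph.mem_neighborFinset G _ _).mpr hc
  have h3 : ({a, b, c} : Finset V).card = 3 := by
    rw [Finset.card_insert_of_notMem (by simp [hab, hac]), Finset.card_pair hbc]
  have := Finset.card_le_card hsub
  rw [h3, G.card_neighborFinset_eq_degree v, h] at this
  omega

lemma not_adj_of_degree_zero {G : SimpleGraph V} {v w : V}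
    (h : G.degree v = 0) (ha : G.Adj w v) : False := by
  have hpos : 0 < G.degree v := by
    rw [← G.card_neighborFinset_eq_degree v]
    exact Finset.card_pos.mpr ⟨w, (SimpleGraph.mem_neighborFinset G _ _).mpr ha.symm⟩
  omega

lemma nbr_sum {G : SimpleGraph V} {v' u' : V} (h2 : G.degree v' = 2)
    (hadj : G.Adj v' u') (m : V → ℕ) (hm0 : m u' = 0)
    (hm1 : ∀ w, G.Adj v' w → w ≠ u' → m w ≤ 1) :
    ∑ w ∈ G.neighborFinset v', m w ≤ 1 := by
  have hu'mem : u' ∈ G.neighborFinset v' := (SimpleGraph.mem_neighborFinset G _ _).mpr hadj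
  rw [← Finset.sum_erase_add _ _ hu'mem, hm0, add_zero]
  calc ∑ w ∈ (G.neighborFinset v').erase u', m w
      ≤ ∑ _w ∈ (G.neighborFinset v').erase u', 1 :=
        Finset.sum_le_sum (fun w hw =>
          hm1 w ((SimpleGraph.mem_neighborFinset G _ _).mp (Finset.mem_erase.mp hw).2)
            (Finset.mem_erase.mp hw).1)
    _ = ((G.neighborFinset v').erase u').card := by simp
    _ ≤ 1 := by
        rw [Finset.card_erase_of_mem hu'mem, G.card_neighborFinset_eq_degree v', h2]

lemma demand_branch {G : SimpleGraph V} {S : Finset V}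
    (hS : ∀ v ∈ S, G.degree v < 3)
    {u' v' : V} (hadj : G.Adj u' v') (hdegv' : G.degree v' = 2)
    (hcard : 2 ≤ (S \ {u', v'}).card)
    (hkey : 3 ≤ (S \ {u', v'}).card ∨
      ∃ a ∈ S \ {u', v'}, ¬ G.Adj v' a ∧ 2 ≤ 3 - G.degree a) :
    DemandSatisfied G S {u', v'} 3
      (fun m => (∃ w₁ w₂, w₁ ≠ w₂ ∧ 0 < m w₁ ∧ 0 < m w₂) ∧
        (∑ w ∈ G.neighborFinset v', m w) ≤ 1) := by
  have hu'A : u' ∉ S \ ({u', v'} : Finset V) := by simp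
  rcases hkey with hcard3 | ⟨a, haA, hna, ha2⟩
  · obtain ⟨B, hBA, hB3⟩ := Finset.exists_subset_card_eq hcard3
    have hu'B : u' ∉ B := fun h => hu'A (hBA h)
    refine ⟨fun w => if w ∈ B then 1 else 0, ?_, ?_, ?_, ?_, ?_⟩
    · intro w
      by_cases h : w ∈ B
      · have hwS : w ∈ S := (Finset.mem_sdiff.mp (hBA h)).1
        have := hS w hwS
        simp only [if_pos h]
        omega
      · simp [h]
    · intro w hw
      have : w ∉ B := fun h => hw (hBA h)
      simp [this]
    · rw [Finset.sum_ite_mem, Finset.inter_eq_right.mpr hBA]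
      simp [hB3]
    · obtain ⟨w₁, h₁, w₂, h₂, hne⟩ := Finset.one_lt_card.mp (by omega : 1 < B.card)
      exact ⟨w₁, w₂, hne, by simp [h₁], by simp [h₂]⟩
    · refine nbr_sum hdegv' hadj.symm _ (by simp [hu'B]) (fun w _ _ => ?_)
      by_cases h : w ∈ B <;> simp [h]
  · obtain ⟨b, hbA, hba⟩ := Finset.exists_mem_ne
      (by omega : 1 < (S \ ({u', v'} : Finset V)).card) a
    have haS : a ∈ S := (Finset.mem_sdiff.mp haA).1
    have hbS : b ∈ S := (Finset.mem_sdiff.mp hbA).1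
    have hau' : a ≠ u' := by
      intro h; exact hu'A (h ▸ haA)
    have hbu' : b ≠ u' := by
      intro h; exact hu'A (h ▸ hbA)
    refine ⟨fun w => if w = a then 2 else if w = b then 1 else 0, ?_, ?_, ?_, ?_, ?_⟩
    · intro w
      by_cases h : w = a
      · subst h; simpa using ha2
      · by_cases h2 : w = b
        · have hwS : w ∈ S := by rw [h2]; exact hbS
          have := hS w hwS
          show (if w = a then 2 else if w = b then 1 else 0) ≤ 3 - G.degree w
          rw [if_neg h, if_pos h2]
          omega
        · simp [h, h2]
    · intro w hw
      have h1 : w ≠ a := fun e => hw (e ▸ haA)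
      have h2 : w ≠ b := fun e => hw (e ▸ hbA)
      simp [h1, h2]
    · rw [← Finset.sum_erase_add _ _ haA, if_pos rfl]
      have heq : ∑ w ∈ (S \ {u', v'}).erase a,
          (if w = a then 2 else if w = b then 1 else 0) =
          ∑ w ∈ (S \ {u', v'}).erase a, (if w = b then 1 else 0) :=
        Finset.sum_congr rfl (fun w hw => by
          have : w ≠ a := (Finset.mem_erase.mp hw).1
          simp [this])
      rw [heq, Finset.sum_ite_eq' _ b (fun _ => 1),
        if_pos (Finset.mem_erase.mpr ⟨hba, hbA⟩)]
    · exact ⟨a, b, Ne.symm hba, by simp, by simp [hba]⟩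
    · refine nbr_sum hdegv' hadj.symm _ (by simp [Ne.symm hau', Ne.symm hbu']) ?_
      intro w hw _
      by_cases h : w = a
      · exact absurd (h ▸ hw) hna
      · by_cases h2 : w = b
        · show (if w = a then 2 else if w = b then 1 else 0) ≤ 1
          rw [if_neg h, if_pos h2]
        · simp [h, h2]

lemma source_facts {G : SimpleGraph V} {S T : Finset V} {k : ℕ} {P : (V → ℕ) → Prop}
    (hS : ∀ v ∈ S, G.degree v < 3)
    (hT : IsIndicator G S T k P) (hd : DemandSatisfied G S T k P) :
    T ⊆ S ∧ k ≤ ∑ w ∈ S \ T, (3 - G.degree w) ∧ k ≤ ∑ w ∈ T, (3 - G.degree w) ∧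
      min k 3 + 1 ≤ S.card := by
  obtain ⟨m, hm1, hm2, hm3, hPm⟩ := hd
  have hFst : k ≤ ∑ w ∈ S \ T, (3 - G.degree w) :=
    hm3 ▸ Finset.sum_le_sum (fun w _ => hm1 w)
  have cardST : ∀ C : ℕ, (∀ w, m w ≤ C) → k ≤ (S \ T).card * C := by
    intro C hC
    calc k = ∑ w ∈ S \ T, m w := hm3.symm
      _ ≤ ∑ _w ∈ S \ T, C := Finset.sum_le_sum fun w _ => hC w
      _ = (S \ T).card * C := by rw [Finset.sum_const, smul_eq_mul]
  have card3 : k ≤ (S \ T).card * 3 := cardST 3 (fun w => le_trans (hm1 w) (by omega))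
  rcases hT with ⟨v, ⟨hvS, hdv, -⟩, rfl, rfl, rfl⟩ |
    ⟨u, v, huS, hvS, hadj, hdu, hdv, rfl, rfl, rfl⟩ |
    ⟨v, ⟨hvS, hdv, -⟩, rfl, rfl, rfl⟩ |
    ⟨u, v, huS, hvS, hadj, hdu, hdv, rfl, rfl, rfl⟩ |
    ⟨v, hvS, hdv, rfl, rfl, rfl⟩ |
    ⟨u, v, huS, hvS, hadj, hdu, hdv, rfl, rfl, rfl⟩ |
    ⟨u, v, huS, hvS, hne, hdu, hdv, rfl, rfl, rfl⟩ |
    ⟨u, v, w, huS, hvS, hwS, hauv, havw, hawu, hdu, hdv, hdw, rfl, rfl, rfl⟩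
  -- (1) joker
  · have hTS : ({v} : Finset V) ⊆ S := Finset.singleton_subset_iff.mpr hvS
    have hcard := Finset.card_sdiff_add_card_eq_card hTS
    rw [Finset.card_singleton] at hcard
    refine ⟨hTS, hFst, ?_, ?_⟩
    · rw [Finset.sum_singleton, hdv] <;> omega
    · omega
  -- (2) pair
  · have hne := hadj.ne
    have hTS : ({u, v} : Finset V) ⊆ S := by
      simp [Finset.insert_subset_iff, huS, hvS]
    have hcard := Finset.card_sdiff_add_card_eq_card hTS
    rw [Finset.card_pair hne] at hcard
    refine ⟨hTS, hFst, ?_, ?_⟩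
    · rw [Finset.sum_pair hne, hdu, hdv] <;> omega
    · omega
  -- (3) leaf
  · have hTS : ({v} : Finset V) ⊆ S := Finset.singleton_subset_iff.mpr hvS
    have hcard := Finset.card_sdiff_add_card_eq_card hTS
    rw [Finset.card_singleton] at hcard
    have hc1 := cardST 1 hPm
    refine ⟨hTS, hFst, ?_, ?_⟩
    · rw [Finset.sum_singleton, hdv] <;> omega
    · omega
  -- (4) branch
  · have hne := hadj.ne
    have hTS : ({u, v} : Finset V) ⊆ S := by
      simp [Finset.insert_subset_iff, huS, hvS]
    have hcard := Finset.card_sdiff_add_card_eq_card hTS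
    rw [Finset.card_pair hne] at hcard
    obtain ⟨⟨w₁, w₂, hne12, hp1, hp2⟩, -⟩ := hPm
    have hw₁ : w₁ ∈ S \ {u, v} := by
      by_contra h; rw [hm2 w₁ h] at hp1; omega
    have hw₂ : w₂ ∈ S \ {u, v} := by
      by_contra h; rw [hm2 w₂ h] at hp2; omega
    have h2c : 1 < (S \ ({u, v} : Finset V)).card :=
      Finset.one_lt_card.mpr ⟨w₁, hw₁, w₂, hw₂, hne12⟩
    refine ⟨hTS, hFst, ?_, ?_⟩
    · rw [Finset.sum_pair hne, hdu, hdv] <;> omega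
    · omega
  -- (5) island
  · have hTS : ({v} : Finset V) ⊆ S := Finset.singleton_subset_iff.mpr hvS
    have hcard := Finset.card_sdiff_add_card_eq_card hTS
    rw [Finset.card_singleton] at hcard
    have hc1 := cardST 1 hPm
    refine ⟨hTS, hFst, ?_, ?_⟩
    · rw [Finset.sum_singleton, hdv] <;> omega
    · omega
  -- (6) stick
  · have hne := hadj.ne
    have hTS : ({u, v} : Finset V) ⊆ S := by
      simp [Finset.insert_subset_iff, huS, hvS]
    have hcard := Finset.card_sdiff_add_card_eq_card hTS
    rw [Finset.card_pair hne] at hcard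
    have hc2 := cardST 2 hPm
    refine ⟨hTS, hFst, ?_, ?_⟩
    · rw [Finset.sum_pair hne, hdu, hdv] <;> omega
    · omega
  -- (7) two isolated
  · have hTS : ({u, v} : Finset V) ⊆ S := by
      simp [Finset.insert_subset_iff, huS, hvS]
    have hcard := Finset.card_sdiff_add_card_eq_card hTS
    rw [Finset.card_pair hne] at hcard
    have hc2 := cardST 2 hPm
    refine ⟨hTS, hFst, ?_, ?_⟩
    · rw [Finset.sum_pair hne, hdu, hdv] <;> omega
    · omega
  -- (8) 3-cycle
  · have huv := hauv.ne
    have hvw := havw.ne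
    have huw : u ≠ w := (hawu.ne).symm
    have hTS : ({u, v, w} : Finset V) ⊆ S := by
      simp [Finset.insert_subset_iff, huS, hvS, hwS]
    have hcard := Finset.card_sdiff_add_card_eq_card hTS
    have hcT : ({u, v, w} : Finset V).card = 3 := by
      rw [Finset.card_insert_of_notMem (by simp [huv, huw]), Finset.card_pair hvw]
    rw [hcT] at hcard
    refine ⟨hTS, hFst, ?_, ?_⟩
    · rw [Finset.sum_insert (by simp [huv, huw]), Finset.sum_pair hvw, hdu, hdv, hdw] <;>
        omega
    · omega

lemma g2_bound {G : SimpleGraph V} {S T : Finset V} {k : ℕ} {P : (V → ℕ) → Prop}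
    (hT : IsIndicator G S T k P) (hd : DemandSatisfied G S T k P) (hk4 : 4 ≤ k) :
    8 ≤ ∑ w ∈ S, min (3 - G.degree w) 2 := by
  obtain ⟨m, hm1, hm2, hm3, hPm⟩ := hd
  rcases hT with ⟨v, -, -, rfl, -⟩ |
    ⟨u, v, -, -, -, -, -, -, rfl, -⟩ |
    ⟨v, -, -, rfl, -⟩ |
    ⟨u, v, -, -, -, -, -, -, rfl, -⟩ |
    ⟨v, -, -, -, rfl, -⟩ |
    ⟨u, v, huS, hvS, hadj, hdu, hdv, rfl, rfl, rfl⟩ |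
    ⟨u, v, huS, hvS, hne, hdu, hdv, rfl, rfl, rfl⟩ |
    ⟨u, v, w, -, -, -, -, -, -, -, -, -, -, rfl, -⟩
  · omega
  · omega
  · omega
  · omega
  · omega
  · have hne := hadj.ne
    have hTS : ({u, v} : Finset V) ⊆ S := by
      simp [Finset.insert_subset_iff, huS, hvS]
    have hsd : ∑ w ∈ S \ {u, v}, min (3 - G.degree w) 2 +
        ∑ w ∈ ({u, v} : Finset V), min (3 - G.degree w) 2 =
        ∑ w ∈ S, min (3 - G.degree w) 2 := Finset.sum_sdiff hTS
    have h1 : 4 ≤ ∑ w ∈ S \ {u, v}, min (3 - G.degree w) 2 :=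
      hm3 ▸ Finset.sum_le_sum (fun w _ => le_min (hm1 w) (hPm w))
    have h2 : ∑ w ∈ ({u, v} : Finset V), min (3 - G.degree w) 2 = 4 := by
      rw [Finset.sum_pair hne, hdu, hdv]
      decide
    omega
  · have hTS : ({u, v} : Finset V) ⊆ S := by
      simp [Finset.insert_subset_iff, huS, hvS]
    have hsd : ∑ w ∈ S \ {u, v}, min (3 - G.degree w) 2 +
        ∑ w ∈ ({u, v} : Finset V), min (3 - G.degree w) 2 =
        ∑ w ∈ S, min (3 - G.degree w) 2 := Finset.sum_sdiff hTS
    have h1 : 4 ≤ ∑ w ∈ S \ {u, v}, min (3 - G.degree w) 2 :=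
      hm3 ▸ Finset.sum_le_sum (fun w _ => le_min (hm1 w) (hPm w))
    have h2 : ∑ w ∈ ({u, v} : Finset V), min (3 - G.degree w) 2 = 4 := by
      rw [Finset.sum_pair hne, hdu, hdv]
      decide
    omega
  · omega

end AugmentationAux

open Augmentation in
/-- paper's Lemma 2. If `S` contains at least one indicator
set and `T` is an indicator set of maximum demand, then `S` satisfies the
matching condition if and only if the demand of `T` is satisfied. -/
theorem matchingCond_iff_max_indicator_demand_satisfied
    {V : Type*} [Fintype V] [DecidableEq V] (G : SimpleGraph V)
    (hG : ∀ v, G.degree v ≤ 3) (S : Finset V) (hS : ∀ v ∈ S, G.degree v < 3)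
    (T : Finset V) (k : ℕ) (P : (V → ℕ) → Prop)
    (hT : IsIndicator G S T k P)
    (hmax : ∀ T' k' P', IsIndicator G S T' k' P' → k' ≤ k) :
    MatchingCond G S ↔ DemandSatisfied G S T k P := by
  classical
  constructor
  · intro h
    exact h T k P hT
  · intro hd T' k' P' hT'
    have hk'k : k' ≤ k := hmax T' k' P' hT'
    obtain ⟨hTS, hFst, hFT, hcardS⟩ := AugmentationAux.source_facts hS hT hd
    have hsd : ∑ w ∈ S \ T, (3 - G.degree w) + ∑ w ∈ T, (3 - G.degree w) =
        ∑ w ∈ S, (3 - G.degree w) := Finset.sum_sdiff hTS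
    rcases hT' with ⟨v', ⟨hv'S, hdv', -⟩, rfl, rfl, rfl⟩ |
      ⟨u', v', hu'S, hv'S, hadj', hdu', hdv', rfl, rfl, rfl⟩ |
      ⟨v', ⟨hv'S, hdv', -⟩, rfl, rfl, rfl⟩ |
      ⟨u', v', hu'S, hv'S, hadj', hdu', hdv', rfl, rfl, rfl⟩ |
      ⟨v', hv'S, hdv', rfl, rfl, rfl⟩ |
      ⟨u', v', hu'S, hv'S, hadj', hdu', hdv', rfl, rfl, rfl⟩ |
      ⟨u', v', hu'S, hv'S, hne', hdu', hdv', rfl, rfl, rfl⟩ |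
      ⟨a', b', c', haS', hbS', hcS', hab', hbc', hca', hda', hdb', hdc', rfl, rfl, rfl⟩
    -- (1) joker target
    · have hsub : ({v'} : Finset V) ⊆ S := Finset.singleton_subset_iff.mpr hv'S
      have hsd' : ∑ w ∈ S \ {v'}, (3 - G.degree w) +
          ∑ w ∈ ({v'} : Finset V), (3 - G.degree w) =
          ∑ w ∈ S, (3 - G.degree w) := Finset.sum_sdiff hsub
      have h1 : ∑ w ∈ ({v'} : Finset V), (3 - G.degree w) = 1 := by
        rw [Finset.sum_singleton, hdv']
      exact AugmentationAux.demand_true (by omega)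
    -- (2) pair target
    · have hne' := hadj'.ne
      have hsub : ({u', v'} : Finset V) ⊆ S := by
        simp [Finset.insert_subset_iff, hu'S, hv'S]
      have hsd' : ∑ w ∈ S \ {u', v'}, (3 - G.degree w) +
          ∑ w ∈ ({u', v'} : Finset V), (3 - G.degree w) =
          ∑ w ∈ S, (3 - G.degree w) := Finset.sum_sdiff hsub
      have h1 : ∑ w ∈ ({u', v'} : Finset V), (3 - G.degree w) = 2 := by
        rw [Finset.sum_pair hne', hdu', hdv']
      exact AugmentationAux.demand_true (by omega)
    -- (3) leaf target
    · have hsub : ({v'} : Finset V) ⊆ S := Finset.singleton_subset_iff.mpr hv'S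
      have hc : (S \ ({v'} : Finset V)).card = S.card - 1 := by
        rw [Finset.card_sdiff_of_subset hsub, Finset.card_singleton]
      exact AugmentationAux.demand_cap1 hS (by omega)
    -- (4) branch target
    · have hne' : u' ≠ v' := hadj'.ne
      have hsub : ({u', v'} : Finset V) ⊆ S := by
        simp [Finset.insert_subset_iff, hu'S, hv'S]
      have hcA : (S \ ({u', v'} : Finset V)).card = S.card - 2 := by
        rw [Finset.card_sdiff_of_subset hsub, Finset.card_pair hne']
      have hcardA : 2 ≤ (S \ ({u', v'} : Finset V)).card := by omega
      have hfin : (3 ≤ (S \ ({u', v'} : Finset V)).card ∨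
          ∃ a ∈ S \ ({u', v'} : Finset V), ¬ G.Adj v' a ∧ 2 ≤ 3 - G.degree a) →
          DemandSatisfied G S {u', v'} 3
            (fun m => (∃ w₁ w₂, w₁ ≠ w₂ ∧ 0 < m w₁ ∧ 0 < m w₂) ∧
              (∑ w ∈ G.neighborFinset v', m w) ≤ 1) :=
        fun hkey => AugmentationAux.demand_branch hS hadj' hdv' hcardA hkey
      rcases hT with ⟨z, -, -, hkeq, -⟩ |
        ⟨p, q, -, -, -, -, -, -, hkeq, -⟩ |
        ⟨z, -, -, hkeq, -⟩ |
        ⟨p, q, hpS, hqS, hadjpq, hdp, hdq, rfl, rfl, rfl⟩ |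
        ⟨z, hzS, hdz, rfl, rfl, rfl⟩ |
        ⟨p, q, hpS, hqS, hadjpq, hdp, hdq, rfl, rfl, rfl⟩ |
        ⟨p, q, hpS, hqS, hpq, hdp, hdq, rfl, rfl, rfl⟩ |
        ⟨c1, c2, c3, h1S, h2S, h3S, ha12, ha23, ha31, hd1, hd2, hd3, rfl, rfl, rfl⟩
      -- source joker
      · exfalso; omega
      -- source pair
      · exfalso; omega
      -- source leaf
      · exfalso; omega
      -- source branch
      · by_cases hpu : p = u'
        · have hqv : q = v' := by
            refine AugmentationAux.deg1_unique hdp hadjpq ?_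
            rw [hpu]; exact hadj'
          rw [hpu, hqv] at hd
          exact hd
        · have hpv : p ≠ v' := by intro h; rw [h] at hdp; omega
          have hpA : p ∈ S \ ({u', v'} : Finset V) := by
            simp [Finset.mem_sdiff, hpS, hpu, hpv]
          by_cases hadjv'p : G.Adj v' p
          · have hqv : q = v' := AugmentationAux.deg1_unique hdp hadjpq hadjv'p.symm
            by_cases h3c : 3 ≤ (S \ ({u', v'} : Finset V)).card
            · exact hfin (Or.inl h3c)
            obtain ⟨b, hbA, hbp⟩ := Finset.exists_mem_ne
              (by omega : 1 < (S \ ({u', v'} : Finset V)).card) p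
            by_cases hb2 : ¬ G.Adj v' b ∧ 2 ≤ 3 - G.degree b
            · exact hfin (Or.inr ⟨b, hbA, hb2⟩)
            exfalso
            have hbu' : b ≠ u' := by
              intro h; rw [h] at hbA; simp at hbA
            have hnadjb : ¬ G.Adj v' b := fun hcon =>
              AugmentationAux.deg2_not_three hdv' hadj'.symm hadjv'p hcon
                (Ne.symm hpu) (Ne.symm hbu') (Ne.symm hbp)
            have hbdeg : ¬ (2 ≤ 3 - G.degree b) := fun h2 => hb2 ⟨hnadjb, h2⟩
            obtain ⟨m, hm1, hm2, hm3, hPm⟩ := hd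
            obtain ⟨-, hnbr⟩ := hPm
            have hu'mem : u' ∈ G.neighborFinset q := by
              rw [hqv]; exact (SimpleGraph.mem_neighborFinset G _ _).mpr hadj'.symm
            have hmu' : m u' ≤ 1 :=
              le_trans (Finset.single_le_sum (fun i _ => Nat.zero_le (m i)) hu'mem) hnbr
            have hsubT : S \ ({p, q} : Finset V) ⊆ {u', b} := by
              intro w hw
              obtain ⟨hwS, hwT⟩ := Finset.mem_sdiff.mp hw
              by_cases hwA : w ∈ S \ ({u', v'} : Finset V)
              · have hAeq : S \ ({u', v'} : Finset V) = {p, b} := by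
                  refine (Finset.eq_of_subset_of_card_le ?_ ?_).symm
                  · intro x hx
                    rcases Finset.mem_insert.mp hx with rfl | hx
                    · exact hpA
                    · rw [Finset.mem_singleton.mp hx]; exact hbA
                  · rw [Finset.card_pair (Ne.symm hbp)]; omega
                rw [hAeq] at hwA
                rcases Finset.mem_insert.mp hwA with rfl | hwA
                · exact (hwT (Finset.mem_insert_self _ _)).elim
                · rw [Finset.mem_singleton.mp hwA]; simp
              · simp only [Finset.mem_sdiff, hwS, true_and, not_not] at hwA
                rcases Finset.mem_insert.mp hwA with rfl | hwA
                · simp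
                · exfalso
                  rw [Finset.mem_singleton.mp hwA] at hwT
                  exact hwT (by rw [← hqv]; simp)
            have hle : ∑ w ∈ S \ ({p, q} : Finset V), m w ≤ m u' + m b := by
              calc ∑ w ∈ S \ ({p, q} : Finset V), m w
                  ≤ ∑ w ∈ ({u', b} : Finset V), m w :=
                    Finset.sum_le_sum_of_subset hsubT
                _ = m u' + m b := Finset.sum_pair (Ne.symm hbu')
            have hmb := hm1 b
            omega
          · exact hfin (Or.inr ⟨p, hpA, hadjv'p, by omega⟩)
      -- source island
      · have hz1 : z ≠ u' := by intro h; rw [h] at hdz; omega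
        have hz2 : z ≠ v' := by intro h; rw [h] at hdz; omega
        refine hfin (Or.inr ⟨z, ?_, ?_, by omega⟩)
        · simp [Finset.mem_sdiff, hzS, hz1, hz2]
        · intro hadjz; exact AugmentationAux.not_adj_of_degree_zero hdz hadjz
      -- source stick
      · have hpu : p ≠ u' := by
          intro h
          rw [h] at hdp hadjpq
          have hqv : q = v' := AugmentationAux.deg1_unique hdp hadjpq hadj'
          rw [hqv] at hdq; omega
        have hpv : p ≠ v' := by intro h; rw [h] at hdp; omega
        have hnadj : ¬ G.Adj v' p := by
          intro h
          have hqv : q = v' := AugmentationAux.deg1_unique hdp hadjpq h.symm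
          rw [hqv] at hdq; omega
        refine hfin (Or.inr ⟨p, ?_, hnadj, by omega⟩)
        simp [Finset.mem_sdiff, hpS, hpu, hpv]
      -- source two isolated
      · have hp1 : p ≠ u' := by intro h; rw [h] at hdp; omega
        have hp2 : p ≠ v' := by intro h; rw [h] at hdp; omega
        refine hfin (Or.inr ⟨p, ?_, ?_, by omega⟩)
        · simp [Finset.mem_sdiff, hpS, hp1, hp2]
        · intro hadjp; exact AugmentationAux.not_adj_of_degree_zero hdp hadjp
      -- source 3-cycle
      · by_cases h3c : 3 ≤ (S \ ({u', v'} : Finset V)).card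
        · exact hfin (Or.inl h3c)
        exfalso
        have h12 := ha12.ne
        have h23 := ha23.ne
        have h31 := ha31.ne
        have hc1u : c1 ≠ u' := by intro h; rw [h] at hd1; omega
        have hc2u : c2 ≠ u' := by intro h; rw [h] at hd2; omega
        have hc3u : c3 ≠ u' := by intro h; rw [h] at hd3; omega
        have key : ∀ p q : V, p ∈ S → q ∈ S → p ≠ q → p ≠ u' → q ≠ u' →
            p ≠ v' → q ≠ v' → p ∈ ({c1, c2, c3} : Finset V) →
            q ∈ ({c1, c2, c3} : Finset V) → v' ∈ ({c1, c2, c3} : Finset V) → False := by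
          intro p q hpS hqS hpq hpu hqu hpv hqv hpT hqT hvT
          have hpA : p ∈ S \ ({u', v'} : Finset V) := by
            simp [Finset.mem_sdiff, hpS, hpu, hpv]
          have hqA : q ∈ S \ ({u', v'} : Finset V) := by
            simp [Finset.mem_sdiff, hqS, hqu, hqv]
          have hsubA : ({p, q} : Finset V) ⊆ S \ {u', v'} := by
            intro x hx
            rcases Finset.mem_insert.mp hx with rfl | hx
            · exact hpA
            · rw [Finset.mem_singleton.mp hx]; exact hqA
          have hAeq : S \ ({u', v'} : Finset V) = {p, q} :=
            (Finset.eq_of_subset_of_card_le hsubA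
              (by rw [Finset.card_pair hpq]; omega)).symm
          have hsubT : S \ ({c1, c2, c3} : Finset V) ⊆ {u'} := by
            intro w hw
            obtain ⟨hwS, hwT⟩ := Finset.mem_sdiff.mp hw
            by_cases hwA : w ∈ S \ ({u', v'} : Finset V)
            · rw [hAeq] at hwA
              rcases Finset.mem_insert.mp hwA with rfl | hwA
              · exact absurd hpT hwT
              · rw [Finset.mem_singleton.mp hwA] at hwT ⊢
                exact absurd hqT hwT
            · simp only [Finset.mem_sdiff, hwS, true_and, not_not] at hwA
              rcases Finset.mem_insert.mp hwA with rfl | hwA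
              · exact Finset.mem_singleton_self _
              · rw [Finset.mem_singleton.mp hwA] at hwT
                exact absurd hvT hwT
          obtain ⟨m, hm1, hm2, hm3, -⟩ := hd
          have hle : ∑ w ∈ S \ ({c1, c2, c3} : Finset V), m w ≤
              ∑ w ∈ ({u'} : Finset V), m w :=
            Finset.sum_le_sum_of_subset hsubT
          rw [hm3, Finset.sum_singleton] at hle
          have := hm1 u'
          omega
        have hvT : v' = c1 ∨ v' = c2 ∨ v' = c3 := by
          by_contra hcon
          push_neg at hcon
          obtain ⟨hx1, hx2, hx3⟩ := hcon
          have hsub3 : ({c1, c2, c3} : Finset V) ⊆ S \ ({u', v'} : Finset V) := by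
            intro x hx
            simp only [Finset.mem_insert, Finset.mem_singleton] at hx
            rcases hx with rfl | rfl | rfl
            · simp [Finset.mem_sdiff, h1S, hc1u, Ne.symm hx1]
            · simp [Finset.mem_sdiff, h2S, hc2u, Ne.symm hx2]
            · simp [Finset.mem_sdiff, h3S, hc3u, Ne.symm hx3]
          have hcT : ({c1, c2, c3} : Finset V).card = 3 := by
            rw [Finset.card_insert_of_notMem (by simp [h12, Ne.symm h31]),
              Finset.card_pair h23]
          have := Finset.card_le_card hsub3
          omega
        rcases hvT with hv | hv | hv
        · exact key c2 c3 h2S h3S h23 hc2u hc3u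
            (by rw [hv]; exact Ne.symm h12) (by rw [hv]; exact h31)
            (by simp) (by simp) (by rw [hv]; simp)
        · exact key c1 c3 h1S h3S (Ne.symm h31) hc1u hc3u
            (by rw [hv]; exact h12) (by rw [hv]; exact Ne.symm h23)
            (by simp) (by simp) (by rw [hv]; simp)
        · exact key c1 c2 h1S h2S h12 hc1u hc2u
            (by rw [hv]; exact Ne.symm h31) (by rw [hv]; exact h23)
            (by simp) (by simp) (by rw [hv]; simp)
    -- (5) island target
    · have hsub : ({v'} : Finset V) ⊆ S := Finset.singleton_subset_iff.mpr hv'S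
      have hc : (S \ ({v'} : Finset V)).card = S.card - 1 := by
        rw [Finset.card_sdiff_of_subset hsub, Finset.card_singleton]
      exact AugmentationAux.demand_cap1 hS (by omega)
    -- (6) stick target
    · have h8 := AugmentationAux.g2_bound hT hd (by omega)
      have hne' := hadj'.ne
      have hsub : ({u', v'} : Finset V) ⊆ S := by
        simp [Finset.insert_subset_iff, hu'S, hv'S]
      have hsd' : ∑ w ∈ S \ {u', v'}, min (3 - G.degree w) 2 +
          ∑ w ∈ ({u', v'} : Finset V), min (3 - G.degree w) 2 =
          ∑ w ∈ S, min (3 - G.degree w) 2 := Finset.sum_sdiff hsub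
      have h1 : ∑ w ∈ ({u', v'} : Finset V), min (3 - G.degree w) 2 = 4 := by
        rw [Finset.sum_pair hne', hdu', hdv']
        decide
      exact AugmentationAux.demand_cap2 (by omega)
    -- (7) two isolated target
    · have hsub : ({u', v'} : Finset V) ⊆ S := by
        simp [Finset.insert_subset_iff, hu'S, hv'S]
      have h8 := AugmentationAux.g2_bound hT hd (by omega)
      have hsd' : ∑ w ∈ S \ {u', v'}, min (3 - G.degree w) 2 +
          ∑ w ∈ ({u', v'} : Finset V), min (3 - G.degree w) 2 =
          ∑ w ∈ S, min (3 - G.degree w) 2 := Finset.sum_sdiff hsub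
      have h1 : ∑ w ∈ ({u', v'} : Finset V), min (3 - G.degree w) 2 = 4 := by
        rw [Finset.sum_pair hne', hdu', hdv']
        decide
      exact AugmentationAux.demand_cap2 (by omega)
    -- (8) 3-cycle target
    · have h12 := hab'.ne
      have h23 := hbc'.ne
      have h13 : a' ≠ c' := (hca'.ne).symm
      have hsub : ({a', b', c'} : Finset V) ⊆ S := by
        simp [Finset.insert_subset_iff, haS', hbS', hcS']
      have hsd' : ∑ w ∈ S \ {a', b', c'}, (3 - G.degree w) +
          ∑ w ∈ ({a', b', c'} : Finset V), (3 - G.degree w) =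
          ∑ w ∈ S, (3 - G.degree w) := Finset.sum_sdiff hsub
      have h1 : ∑ w ∈ ({a', b', c'} : Finset V), (3 - G.degree w) = 3 := by
        rw [Finset.sum_insert (by simp [h12, h13]), Finset.sum_pair h23,
          hda', hdb', hdc']
        decide
      exact AugmentationAux.demand_true (by omega)
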